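/- arXiv:2402.08177 — 6 statements merged into one kernel-verified Lean document; each statement's English description precedes it below -/
import Mathlib

section
/- With the same setup, the extension F̄ on the completion X̄ is lower semicontinuous. -/
open Filter Topology UniformSpace
open scoped ENNReal

/-- The extension of `F` to the metric completion: the infimum, over Cauchy sequences in `X`
representing the point `xbar` of the completion, of the liminf of `F` along the sequence. -/
noncomputable def FrechetExtension {X : Type*} [MetricSpace X] (F : X → ℝ≥0∞)
    (xbar : Completion X) : ℝ≥0∞ :=
  ⨅ u : {u : ℕ → X // CauchySeq u ∧
      Tendsto (fun n => (u n : Completion X)) atTop (𝓝 xbar)},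
    Filter.liminf (fun n => F (u.1 n)) atTop

/-!
Write `ι : X → X̄` for the embedding and `C_c` for the closure of `ι '' {F < c}`. A sequence
realizing `F̄ x̄ < c` is frequently in `{F < c}`, and a sequence of `{F < c}` converging to `x̄` is
Cauchy, so `{F̄ < c} ⊆ C_c ⊆ {F̄ ≤ c}`. If `y < c < F̄ x̄`, then `x̄ ∉ C_c`, and the complement of
the closed set `C_c` is a neighbourhood of `x̄` on which `F̄ ≥ c > y`.
-/

theorem UniformSpace.Completion.cauchySeq_of_tendsto_coe {X : Type*} [UniformSpace X]
    {u : ℕ → X} {xbar : Completion X}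
    (hu : Tendsto (fun n => (u n : Completion X)) atTop (𝓝 xbar)) : CauchySeq u :=
  (Completion.isUniformInducing_coe X).cauchy_map_iff.1 <| by
    rw [Filter.map_map]
    exact hu.cauchySeq

section FrechetExtension

variable {X : Type*} [MetricSpace X] (F : X → ℝ≥0∞)

theorem frechetExtension_le_liminf {u : ℕ → X} {xbar : Completion X}
    (hu : Tendsto (fun n => (u n : Completion X)) atTop (𝓝 xbar)) :
    FrechetExtension F xbar ≤ liminf (fun n => F (u n)) atTop :=
  iInf_le_of_le ⟨u, Completion.cauchySeq_of_tendsto_coe hu, hu⟩ le_rfl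

theorem frechetExtension_le_of_mem_closure {c : ℝ≥0∞} {xbar : Completion X}
    (hx : xbar ∈ closure (((↑) : X → Completion X) '' {x | F x < c})) :
    FrechetExtension F xbar ≤ c := by
  obtain ⟨v, hv_mem, hv_lim⟩ := mem_closure_iff_seq_limit.1 hx
  choose u hu_lt hu_eq using hv_mem
  obtain rfl : (fun n => (u n : Completion X)) = v := funext hu_eq
  calc FrechetExtension F xbar ≤ liminf (fun n => F (u n)) atTop :=
        frechetExtension_le_liminf F hv_lim
    _ ≤ c := liminf_le_of_frequently_le (Frequently.of_forall fun n => (hu_lt n).le)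

theorem mem_closure_of_frechetExtension_lt {c : ℝ≥0∞} {xbar : Completion X}
    (hx : FrechetExtension F xbar < c) :
    xbar ∈ closure (((↑) : X → Completion X) '' {x | F x < c}) := by
  obtain ⟨⟨u, _, hu_lim⟩, hu_lt⟩ := iInf_lt_iff.1 hx
  have hfreq : ∃ᶠ n in atTop, F (u n) < c :=
    frequently_lt_of_liminf_lt (by isBoundedDefault) hu_lt
  exact mem_closure_of_frequently_of_tendsto (hfreq.mono fun n hn => ⟨u n, hn, rfl⟩) hu_lim

end FrechetExtension

theorem frechetExtension_lowerSemicontinuous_general {X : Type*} [MetricSpace X] (F : X → ℝ≥0∞) :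
    LowerSemicontinuous (FrechetExtension F) := by
  intro xbar y hy
  obtain ⟨c, hyc, hc⟩ := exists_between hy
  have hx : xbar ∉ closure (((↑) : X → Completion X) '' {x | F x < c}) := fun hx =>
    (frechetExtension_le_of_mem_closure F hx).not_gt hc
  filter_upwards [isClosed_closure.isOpen_compl.mem_nhds hx] with z hz
  exact hyc.trans_le (not_lt.1 fun hzc => hz (mem_closure_of_frechetExtension_lt F hzc))

theorem frechetExtension_lowerSemicontinuous {X : Type*} [MetricSpace X] (F : X → ℝ≥0∞)
    (hF : LowerSemicontinuous F)
    (hA : ∀ x : X, ∃ u : ℕ → X, (∀ n, u n ≠ x) ∧ Tendsto u atTop (𝓝 x) ∧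
      Tendsto (fun n => F (u n)) atTop (𝓝 (F x))) :
    LowerSemicontinuous (FrechetExtension F) :=
  frechetExtension_lowerSemicontinuous_general F
end

section
/- With the same setup, for each x̄ ∈ X̄ there exists a Cauchy sequence {xₙ} in the equivalence class x̄ such that lim F(xₙ) = F̄(x̄). -/
/-!
Sequences in `X` tending to the filter `comap (↑) (𝓝 xbar)` are exactly the sequences
representing `xbar`, so the infimum defining the extension is the liminf of `F` along that filter.
The filter is nontrivial since `X` is dense in its completion, and countably generated since the
completion is metric; hence the liminf, being a cluster point of `F` along it, is the limit of `F`
along one such sequence.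
-/

open Filter Topology UniformSpace
open scoped ENNReal

theorem DenseRange.exists_seq_tendsto_liminf_comap {X Y α : Type*} [TopologicalSpace Y]
    [FirstCountableTopology Y] [CompleteLinearOrder α] [TopologicalSpace α] [OrderTopology α]
    [FirstCountableTopology α] {e : X → Y} (he : DenseRange e) (F : X → α) (y : Y) :
    ∃ u : ℕ → X, Tendsto (e ∘ u) atTop (𝓝 y) ∧
      Tendsto (F ∘ u) atTop (𝓝 (liminf F (comap e (𝓝 y)))) := by
  have : NeBot (comap e (𝓝 y)) := comap_neBot fun _ => he.mem_nhds
  obtain ⟨u, hFu, hu⟩ := exists_seq_tendsto_liminf (u := F) (f := comap e (𝓝 y))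
  exact ⟨u, tendsto_comap_iff.1 hu, hFu⟩

theorem frechetExtension_eq_liminf_comap {X : Type*} [MetricSpace X] (F : X → ℝ≥0∞)
    (xbar : Completion X) :
    FrechetExtension F xbar = liminf F (comap ((↑) : X → Completion X) (𝓝 xbar)) := by
  apply le_antisymm
  · obtain ⟨u, hu, hFu⟩ := Completion.denseRange_coe.exists_seq_tendsto_liminf_comap F xbar
    calc FrechetExtension F xbar ≤ liminf (F ∘ u) atTop :=
          iInf_le_of_le ⟨u, Completion.cauchySeq_of_tendsto_coe hu, hu⟩ le_rfl
      _ = _ := hFu.liminf_eq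
  · refine le_iInf fun ⟨u, _, hu⟩ => ?_
    have hu' : Tendsto u atTop (comap ((↑) : X → Completion X) (𝓝 xbar)) := tendsto_comap_iff.2 hu
    exact hu'.liminf_le_liminf_comp

theorem frechetExtension_attained_general {X : Type*} [MetricSpace X] (F : X → ℝ≥0∞) :
    ∀ xbar : Completion X, ∃ u : ℕ → X, CauchySeq u ∧
      Tendsto (fun n => (u n : Completion X)) atTop (𝓝 xbar) ∧
      Tendsto (fun n => F (u n)) atTop (𝓝 (FrechetExtension F xbar)) := by
  intro xbar
  obtain ⟨u, hu, hFu⟩ := Completion.denseRange_coe.exists_seq_tendsto_liminf_comap F xbar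
  rw [frechetExtension_eq_liminf_comap]
  exact ⟨u, Completion.cauchySeq_of_tendsto_coe hu, hu, hFu⟩

theorem frechetExtension_attained {X : Type*} [MetricSpace X] (F : X → ℝ≥0∞)
    (hF : LowerSemicontinuous F)
    (hA : ∀ x : X, ∃ u : ℕ → X, (∀ n, u n ≠ x) ∧ Tendsto u atTop (𝓝 x) ∧
      Tendsto (fun n => F (u n)) atTop (𝓝 (F x))) :
    ∀ xbar : Completion X, ∃ u : ℕ → X, CauchySeq u ∧
      Tendsto (fun n => (u n : Completion X)) atTop (𝓝 xbar) ∧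
      Tendsto (fun n => F (u n)) atTop (𝓝 (FrechetExtension F xbar)) :=
  frechetExtension_attained_general F
end

section
/- For the Schwarz lantern, lim_{m→∞} lim_{n→∞} Area(P(m,n)) = 2π, i.e., taking n → ∞ first and then m → ∞, the areas converge to 2π. -/
/-! As `n → ∞` the angle `x = π / n` tends to `0`, and in terms of `x` the area is the continuous
function `2π · sinc x · √((m (1 - cos x))² + 1)`, whose value at `x = 0` is `2π`. -/

open Real Filter Topology

noncomputable def schwarzArea (m n : ℕ) : ℝ :=
  2 * m * n * Real.sin (π / n) *
    Real.sqrt ((1 - Real.cos (π / n)) ^ 2 + (1 / m : ℝ) ^ 2)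

theorem schwarzArea_eq_sinc {m n : ℕ} (hm : m ≠ 0) (hn : n ≠ 0) :
    schwarzArea m n = 2 * π * sinc (π / n) * √((m * (1 - cos (π / n))) ^ 2 + 1) := by
  have hm' : (m : ℝ) ≠ 0 := Nat.cast_ne_zero.mpr hm
  have hn' : (n : ℝ) ≠ 0 := Nat.cast_ne_zero.mpr hn
  have hsqrt : √((m * (1 - cos (π / n))) ^ 2 + 1) =
      m * √((1 - cos (π / n)) ^ 2 + (1 / m : ℝ) ^ 2) :=
    calc √((m * (1 - cos (π / n))) ^ 2 + 1)
        = √((m : ℝ) ^ 2 * ((1 - cos (π / n)) ^ 2 + (1 / m : ℝ) ^ 2)) := by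
          congr 1
          field_simp
      _ = m * √((1 - cos (π / n)) ^ 2 + (1 / m : ℝ) ^ 2) := by
          rw [sqrt_mul (sq_nonneg _), sqrt_sq (Nat.cast_nonneg m)]
  rw [schwarzArea, sinc_of_ne_zero (div_ne_zero pi_ne_zero hn'), hsqrt]
  field_simp

theorem tendsto_schwarzArea_atTop {m : ℕ} (hm : m ≠ 0) :
    Tendsto (schwarzArea m) atTop (𝓝 (2 * π)) := by
  have hcont : Continuous fun x => 2 * π * sinc x * √((m * (1 - cos x)) ^ 2 + 1) :=
    (continuous_const.mul continuous_sinc).mul (by fun_prop)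
  have hlim := (hcont.tendsto 0).comp (tendsto_const_div_atTop_nhds_zero_nat π)
  simp only [sinc_zero, cos_zero, sub_self, mul_zero, zero_pow two_ne_zero, zero_add,
    sqrt_one, mul_one] at hlim
  refine hlim.congr' ?_
  filter_upwards [eventually_ne_atTop 0] with n hn
  exact (schwarzArea_eq_sinc hm hn).symm

/-- Taking `n → ∞` first, the Schwarz lantern areas tend to `2π` for every fixed `m > 0`;
hence the iterated limit `lim_{m→∞} lim_{n→∞} Area(P(m,n))` equals `2π`. -/
theorem schwarz_lantern_iterated_limit :
    (∀ m : ℕ, 0 < m → Tendsto (fun n => schwarzArea m n) atTop (𝓝 (2 * π))) ∧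
      Tendsto (fun _ : ℕ => (2 * π : ℝ)) atTop (𝓝 (2 * π)) :=
  ⟨fun _ hm => tendsto_schwarzArea_atTop hm.ne', tendsto_const_nhds⟩
end

section
/- For the Schwarz lantern, with m = n, lim_{n→∞} Area(P(n,n)) = 2π. -/
open Real Filter Topology

/-! Both factors of the area are of the form `x * f (c / x)` with `f 0 = 0`, namely
`n * sin (π / n) → π` and `m * (1 - cos (π / n)) → 0` when `m = n`; such a product tends to
`c * f'(0)` because it equals `c` times the difference quotient of `f` at `0`. -/

lemma schwarzArea_eq {m : ℕ} (hm : m ≠ 0) (n : ℕ) :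
    schwarzArea m n =
      2 * (n * sin (π / n)) * √((m * (1 - cos (π / n))) ^ 2 + 1) := by
  have hm' : (m : ℝ) ≠ 0 := Nat.cast_ne_zero.mpr hm
  have hsq : (m * (1 - cos (π / n))) ^ 2 + 1 =
      (m : ℝ) ^ 2 * ((1 - cos (π / n)) ^ 2 + (1 / m) ^ 2) := by
    field_simp
  rw [schwarzArea, hsq, sqrt_mul (sq_nonneg _), sqrt_sq m.cast_nonneg]
  ring

lemma tendsto_mul_comp_const_div_atTop {f : ℝ → ℝ} {f' : ℝ} (hf : HasDerivAt f f' 0)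
    (hf0 : f 0 = 0) (c : ℝ) :
    Tendsto (fun x => x * f (c / x)) atTop (𝓝 (c * f')) := by
  have hcont : Tendsto (dslope f 0) (𝓝 0) (𝓝 f') := by
    simpa [dslope_same, hf.deriv] using
      (continuousAt_dslope_same.mpr hf.differentiableAt).tendsto
  have hlim := (hcont.comp ((tendsto_const_nhds (x := c)).div_atTop tendsto_id)).const_mul c
  refine hlim.congr' ?_
  filter_upwards [eventually_ne_atTop 0] with x hx
  rcases eq_or_ne c 0 with rfl | hc
  · simp [hf0]
  · rw [Function.comp_apply, id, dslope_of_ne f (div_ne_zero hc hx), slope_def_field, hf0,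
      sub_zero, sub_zero]
    field_simp

/-- With `m = n`, the Schwarz lantern areas converge to `2π`. -/
theorem schwarz_lantern_diagonal_limit :
    Tendsto (fun n => schwarzArea n n) atTop (𝓝 (2 * π)) := by
  have hsin : Tendsto (fun n : ℕ => (n : ℝ) * sin (π / n)) atTop (𝓝 π) := by
    simpa [Function.comp_def] using
      (tendsto_mul_comp_const_div_atTop (hasDerivAt_sin 0) sin_zero π).comp
        tendsto_natCast_atTop_atTop
  have hcos : Tendsto (fun n : ℕ => (n : ℝ) * (1 - cos (π / n))) atTop (𝓝 0) := by
    simpa [Function.comp_def] using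
      (tendsto_mul_comp_const_div_atTop ((hasDerivAt_cos 0).const_sub 1) (by simp) π).comp
        tendsto_natCast_atTop_atTop
  have hlim := (hsin.const_mul 2).mul (((hcos.pow 2).add_const 1).sqrt)
  rw [show 2 * π * √((0 : ℝ) ^ 2 + 1) = 2 * π by simp] at hlim
  refine hlim.congr' ?_
  filter_upwards [eventually_ne_atTop 0] with n hn
  exact (schwarzArea_eq hn n).symm
end

section
/- Let f : Q → ℝ be continuous on Q = [0,1]² and suppose the Lebesgue area L_Q[f] is finite. Then there exists a sequence of quasi-linear functions Πₙ : Q → ℝ converging uniformly to f with a(Πₙ) → L_Q[f] (the proper sequential limit principle). -/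
open MeasureTheory Set Filter Topology
open scoped ENNReal

/-- The unit square `Q = [0,1] × [0,1]` in the plane. -/
def unitSquare : Set (ℝ × ℝ) := Set.Icc (0, 0) (1, 1)

/-- The (closed) triangle with the given three vertices. -/
def triangle2 (A B C : ℝ × ℝ) : Set (ℝ × ℝ) := convexHull ℝ ({A, B, C} : Set (ℝ × ℝ))

/-- `f` is quasi linear on the unit square: it is continuous there and there is a finite
decomposition of the square into nonoverlapping triangles on each of which `f` is
(affine) linear. -/
def IsQuasiLinear (f : ℝ × ℝ → ℝ) : Prop :=
  ContinuousOn f unitSquare ∧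
  ∃ (N : ℕ) (V : Fin N → Fin 3 → ℝ × ℝ),
    (⋃ i, triangle2 (V i 0) (V i 1) (V i 2)) = unitSquare ∧
    (∀ i j, i ≠ j →
      interior (triangle2 (V i 0) (V i 1) (V i 2)) ∩
        interior (triangle2 (V j 0) (V j 1) (V j 2)) = ∅) ∧
    (∀ i, ∃ a b c : ℝ, ∀ p ∈ triangle2 (V i 0) (V i 1) (V i 2),
      f p = a * p.1 + b * p.2 + c)

/-- The elementary area of a quasi linear function: the sum of the areas of the image
triangles in ℝ³, which equals `∬_Q √(1 + fₓ² + f_y²)`. -/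
noncomputable def elemArea (f : ℝ × ℝ → ℝ) : ℝ :=
  ∫ p in unitSquare,
    Real.sqrt (1 + (fderiv ℝ f p (1, 0)) ^ 2 + (fderiv ℝ f p (0, 1)) ^ 2)

/-- The Lebesgue area of `f : Q → ℝ`: the infimum, over all sequences of quasi linear
functions converging uniformly on `Q` to `f`, of the liminf of the elementary areas. -/
noncomputable def LebesgueArea (f : ℝ × ℝ → ℝ) : ℝ≥0∞ :=
  ⨅ s : {s : ℕ → (ℝ × ℝ → ℝ) // (∀ n, IsQuasiLinear (s n)) ∧
      TendstoUniformlyOn s f atTop unitSquare},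
    Filter.liminf (fun n => ENNReal.ofReal (elemArea (s.1 n))) atTop

/-- The proper sequential limit principle: if `f` is continuous on `Q` with finite Lebesgue
area, there is a sequence of quasi linear functions converging uniformly to `f` whose
elementary areas converge to `L_Q[f]`. -/
theorem lebesgueArea_attained (f : ℝ × ℝ → ℝ) (hf : ContinuousOn f unitSquare)
    (hfin : LebesgueArea f < ⊤) :
    ∃ s : ℕ → (ℝ × ℝ → ℝ), (∀ n, IsQuasiLinear (s n)) ∧
      TendstoUniformlyOn s f atTop unitSquare ∧
      Tendsto (fun n => ENNReal.ofReal (elemArea (s n))) atTop (𝓝 (LebesgueArea f)) := by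
  have hLne : LebesgueArea f ≠ ⊤ := hfin.ne
  -- Step 1: for each m, pick an admissible sequence with liminf area < L + (m+1)⁻¹
  have hseq : ∀ m : ℕ, ∃ s : ℕ → (ℝ × ℝ → ℝ),
      (∀ n, IsQuasiLinear (s n)) ∧ TendstoUniformlyOn s f atTop unitSquare ∧
      Filter.liminf (fun n => ENNReal.ofReal (elemArea (s n))) atTop
        < LebesgueArea f + ((m : ℝ≥0∞) + 1)⁻¹ := by
    intro m
    have hlt : LebesgueArea f < LebesgueArea f + ((m : ℝ≥0∞) + 1)⁻¹ :=
      ENNReal.lt_add_right hLne (by simp)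
    conv_lhs at hlt => rw [LebesgueArea]
    obtain ⟨⟨s, hs1, hs2⟩, hslt⟩ := iInf_lt_iff.mp hlt
    exact ⟨s, hs1, hs2, hslt⟩
  choose S hS1 hS2 hS3 using hseq
  -- Step 2: for each m, pick an index giving small area and uniform closeness
  have hsel : ∀ m : ℕ, ∃ n : ℕ,
      ENNReal.ofReal (elemArea (S m n)) < LebesgueArea f + ((m : ℝ≥0∞) + 1)⁻¹ ∧
      ∀ x ∈ unitSquare, dist (f x) (S m n x) < 1 / (m + 1 : ℝ) := by
    intro m
    have h1 : ∃ᶠ n in atTop,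
        ENNReal.ofReal (elemArea (S m n)) < LebesgueArea f + ((m : ℝ≥0∞) + 1)⁻¹ :=
      Filter.frequently_lt_of_liminf_lt (by isBoundedDefault) (hS3 m)
    have h2 : ∀ᶠ n in atTop, ∀ x ∈ unitSquare, dist (f x) (S m n x) < 1 / (m + 1 : ℝ) :=
      (Metric.tendstoUniformlyOn_iff.mp (hS2 m)) _ (by positivity)
    exact (h1.and_eventually h2).exists
  choose n hn1 hn2 using hsel
  set t : ℕ → (ℝ × ℝ → ℝ) := fun m => S m (n m) with ht
  have hql : ∀ m, IsQuasiLinear (t m) := fun m => hS1 m (n m)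
  have huni : TendstoUniformlyOn t f atTop unitSquare := by
    rw [Metric.tendstoUniformlyOn_iff]
    intro ε hε
    obtain ⟨M, hM⟩ := exists_nat_one_div_lt hε
    filter_upwards [eventually_ge_atTop M] with m hm x hx
    calc dist (f x) (t m x) < 1 / (m + 1 : ℝ) := hn2 m x hx
      _ ≤ 1 / (M + 1 : ℝ) := by
          apply one_div_le_one_div_of_le (by positivity)
          exact_mod_cast Nat.add_le_add_right hm 1
      _ < ε := hM
  refine ⟨t, hql, huni, ?_⟩
  -- limits in ℝ≥0∞
  have hliminf : LebesgueArea f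
      ≤ Filter.liminf (fun m => ENNReal.ofReal (elemArea (t m))) atTop := by
    conv_lhs => rw [LebesgueArea]
    exact iInf_le (fun s : {s : ℕ → (ℝ × ℝ → ℝ) // (∀ n, IsQuasiLinear (s n)) ∧
        TendstoUniformlyOn s f atTop unitSquare} =>
      Filter.liminf (fun n => ENNReal.ofReal (elemArea (s.1 n))) atTop) ⟨t, hql, huni⟩
  have hinv : Tendsto (fun m : ℕ => ((m : ℝ≥0∞) + 1)⁻¹) atTop (𝓝 0) := by
    have h1 : Tendsto (fun m : ℕ => (m : ℝ≥0∞)) atTop (𝓝 ⊤) :=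
      ENNReal.tendsto_nat_nhds_top
    have h2 : Tendsto (fun m : ℕ => (m : ℝ≥0∞) + 1) atTop (𝓝 ⊤) := by
      simpa using h1.add_const (b := (1 : ℝ≥0∞))
    simpa [ENNReal.inv_top] using (ENNReal.tendsto_inv_iff.mpr h2)
  have hg : Tendsto (fun m : ℕ => LebesgueArea f + ((m : ℝ≥0∞) + 1)⁻¹) atTop
      (𝓝 (LebesgueArea f)) := by
    have := Filter.Tendsto.add (tendsto_const_nhds (x := LebesgueArea f) (f := (atTop : Filter ℕ)))
      hinv
    simpa using this
  have hlimsup : Filter.limsup (fun m => ENNReal.ofReal (elemArea (t m))) atTop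
      ≤ LebesgueArea f := by
    calc Filter.limsup (fun m => ENNReal.ofReal (elemArea (t m))) atTop
        ≤ Filter.limsup (fun m : ℕ => LebesgueArea f + ((m : ℝ≥0∞) + 1)⁻¹) atTop :=
          Filter.limsup_le_limsup (Filter.Eventually.of_forall fun m => (hn1 m).le)
      _ = LebesgueArea f := hg.limsup_eq
  exact tendsto_of_le_liminf_of_limsup_le hliminf hlimsup
end

section
/- If f : Q → ℝ has continuous partial derivatives p = ∂f/∂x and q = ∂f/∂y on Q = [0,1]², then the Geöcze sums G(f;Dₙ) along subdivisions Dₙ of Q into rectangles with maximum diameter tending to zero converge to ∬_Q (1 + p² + q²)^{1/2} dx dy. -/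
/-!
On a rectangle `R = [a,b] × [c,d]` with corner `z₀ = (a,c)` on which `p` and `q` oscillate by at
most `ε`, the mean value inequality in `y` gives `|f(x,d) - f(x,c)| ≈ (d - c) |q z₀|` for every `x`,
so `G_X(f;R) ≈ |R| |q z₀|`, and symmetrically `G_Y(f;R) ≈ |R| |p z₀|`, up to `ε |R|`. Since
`√(u² + v² + w)` is `1`-Lipschitz in `u` and in `v`, both `Γ(f;R)` and `∬_R √(1 + p² + q²)` lie
within `2 ε |R|` of `|R| √(1 + p(z₀)² + q(z₀)²)`. The rectangles of a subdivision meet in null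
sets and have total area `1`, and uniform continuity of `p`, `q` on `Q` makes `ε` small once the
mesh is small.
-/

open MeasureTheory Set Filter Topology

/-- `G_X(f;R) = ∫ₐᵇ |f(x,d) − f(x,c)| dx` for the rectangle `R = [a,b] × [c,d]`. -/
noncomputable def geoczeX (f : ℝ × ℝ → ℝ) (a b c d : ℝ) : ℝ :=
  ∫ x in a..b, |f (x, d) - f (x, c)|

/-- `G_Y(f;R) = ∫_c^d |f(b,y) − f(a,y)| dy` for the rectangle `R = [a,b] × [c,d]`. -/
noncomputable def geoczeY (f : ℝ × ℝ → ℝ) (a b c d : ℝ) : ℝ :=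
  ∫ y in c..d, |f (b, y) - f (a, y)|

/-- `Γ(f;R) = √(G_X(f;R)² + G_Y(f;R)² + |R|²)`. -/
noncomputable def geoczeGamma (f : ℝ × ℝ → ℝ) (a b c d : ℝ) : ℝ :=
  Real.sqrt ((geoczeX f a b c d) ^ 2 + (geoczeY f a b c d) ^ 2 +
    ((b - a) * (d - c)) ^ 2)

lemma abs_sqrt_sq_add_sub_sqrt_sq_add_le {k : ℝ} (hk : 0 ≤ k) (u v : ℝ) :
    |√(u ^ 2 + k) - √(v ^ 2 + k)| ≤ |u - v| := by
  have hu : √(u ^ 2 + k) ^ 2 = u ^ 2 + k := Real.sq_sqrt (by positivity)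
  have hv : √(v ^ 2 + k) ^ 2 = v ^ 2 + k := Real.sq_sqrt (by positivity)
  -- `(u² + k)(v² + k) - (uv + k)² = k (u - v)² ≥ 0`
  have hprod : u * v + k ≤ √(u ^ 2 + k) * √(v ^ 2 + k) := by
    rw [← Real.sqrt_mul (by positivity)]
    exact (le_abs_self _).trans (Real.abs_le_sqrt (by nlinarith [sq_nonneg (u - v)]))
  exact sq_le_sq.mp (by nlinarith)

lemma abs_sqrt_sq_add_sq_add_sub_le {w : ℝ} (hw : 0 ≤ w) (u v u' v' : ℝ) :
    |√(u ^ 2 + v ^ 2 + w) - √(u' ^ 2 + v' ^ 2 + w)| ≤ |u - u'| + |v - v'| := by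
  have hu := abs_sqrt_sq_add_sub_sqrt_sq_add_le (k := v ^ 2 + w) (by positivity) u u'
  have hv := abs_sqrt_sq_add_sub_sqrt_sq_add_le (k := u' ^ 2 + w) (by positivity) v v'
  rw [← add_assoc, ← add_assoc] at hu
  rw [← add_assoc, ← add_assoc, add_comm (v ^ 2), add_comm (v' ^ 2)] at hv
  exact (abs_sub_le _ _ _).trans (add_le_add hu hv)

lemma abs_setIntegral_sub_le {α : Type*} [MeasurableSpace α] {μ : Measure α} {s : Set α}
    {g : α → ℝ} {C δ : ℝ} (hs : μ s < ⊤) (hg : IntegrableOn g s μ)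
    (h : ∀ x ∈ s, |g x - C| ≤ δ) : |∫ x in s, g x ∂μ - μ.real s * C| ≤ δ * μ.real s := by
  rw [← smul_eq_mul, ← setIntegral_const, ← integral_sub hg (integrableOn_const hs.ne)]
  exact norm_setIntegral_le_of_norm_le_const hs fun x hx => (Real.norm_eq_abs _).trans_le (h x hx)

lemma aedisjoint_of_interior_inter_eq_empty {α : Type*} [TopologicalSpace α] [MeasurableSpace α]
    {μ : Measure α} {s t : Set α} (hs : μ (frontier s) = 0) (ht : μ (frontier t) = 0)
    (h : interior s ∩ interior t = ∅) : AEDisjoint μ s t := by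
  rw [AEDisjoint, ← measure_congr ((interior_ae_eq_of_null_frontier hs).inter
    (interior_ae_eq_of_null_frontier ht)), h, measure_empty]

lemma sum_setIntegral_eq_of_iUnion_eq {E : Type*} [NormedAddCommGroup E] [NormedSpace ℝ E]
    [MeasurableSpace E] [BorelSpace E] [FiniteDimensional ℝ E] {μ : Measure E}
    [μ.IsAddHaarMeasure] {ι : Type*} [Fintype ι] {S : ι → Set E} {s : Set E} {g : E → ℝ}
    (hconv : ∀ i, Convex ℝ (S i)) (hcover : ⋃ i, S i = s)
    (hdisj : ∀ i j, i ≠ j → interior (S i) ∩ interior (S j) = ∅) (hg : IntegrableOn g s μ) :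
    ∑ i, ∫ x in S i, g x ∂μ = ∫ x in s, g x ∂μ := by
  subst hcover
  rw [integral_iUnion_ae (fun i => (hconv i).nullMeasurableSet μ)
    (fun i j hij => aedisjoint_of_interior_inter_eq_empty ((hconv i).addHaar_frontier μ)
      ((hconv j).addHaar_frontier μ) (hdisj i j hij)) hg, tsum_fintype]

lemma volume_real_Icc_prod {a b c d : ℝ} (hab : a ≤ b) (hcd : c ≤ d) :
    volume.real (Icc ((a, c) : ℝ × ℝ) (b, d)) = (b - a) * (d - c) := by
  rw [Icc_prod_eq, Measure.volume_eq_prod, measureReal_prod_prod, Real.volume_real_Icc_of_le hab,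
    Real.volume_real_Icc_of_le hcd]

lemma abs_sub_le_of_diam_lt {X : Type*} [PseudoMetricSpace X] {s t : Set X} {φ : X → ℝ}
    {δ ε : ℝ} (hφ : ∀ x ∈ t, ∀ y ∈ t, dist x y < δ → dist (φ x) (φ y) < ε) (hst : s ⊆ t)
    (hs : Bornology.IsBounded s) (hdiam : Metric.diam s < δ) {x y : X} (hx : x ∈ s)
    (hy : y ∈ s) : |φ x - φ y| ≤ ε :=
  (hφ x (hst hx) y (hst hy) ((Metric.dist_le_diam_of_mem hs hx hy).trans_lt hdiam)).le

section Rectangle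

variable {f p q : ℝ × ℝ → ℝ} {a b c d m ε : ℝ}

lemma abs_geoczeX_sub_le (hab : a ≤ b) (hcd : c ≤ d)
    (hfc : ContinuousOn (fun x => f (x, c)) (Icc a b))
    (hfd : ContinuousOn (fun x => f (x, d)) (Icc a b))
    (hf : ∀ x ∈ Icc a b, ∀ y ∈ Icc c d, HasDerivAt (fun t => f (x, t)) (q (x, y)) y)
    (hq : ∀ x ∈ Icc a b, ∀ y ∈ Icc c d, |q (x, y) - m| ≤ ε) :
    |geoczeX f a b c d - |m| * ((b - a) * (d - c))| ≤ ε * ((b - a) * (d - c)) := by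
  have hfiber : ∀ x ∈ Icc a b, |(|f (x, d) - f (x, c)|) - |m| * (d - c)| ≤ ε * (d - c) := by
    intro x hx
    have hmvt := norm_image_sub_le_of_norm_deriv_le_segment' (f := fun t => f (x, t) - m * t)
      (fun y hy => ((hf x hx y hy).sub ((hasDerivAt_id y).const_mul m)).hasDerivWithinAt)
      (fun y hy => by simpa using hq x hx y (Ico_subset_Icc_self hy)) d ⟨hcd, le_rfl⟩
    rw [show |m| * (d - c) = |m * (d - c)| by rw [abs_mul, abs_of_nonneg (sub_nonneg.2 hcd)]]
    refine (abs_abs_sub_abs_le_abs_sub _ _).trans (le_of_eq_of_le ?_ hmvt)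
    rw [Real.norm_eq_abs]
    congr 1
    ring
  have hint : IntegrableOn (fun x => |f (x, d) - f (x, c)|) (Ioc a b) :=
    ((hfd.sub hfc).abs.integrableOn_Icc).mono_set Ioc_subset_Icc_self
  have := abs_setIntegral_sub_le measure_Ioc_lt_top hint fun x hx =>
    hfiber x (Ioc_subset_Icc_self hx)
  rw [Real.volume_real_Ioc_of_le hab, ← intervalIntegral.integral_of_le hab] at this
  rw [geoczeX, show |m| * ((b - a) * (d - c)) = (b - a) * (|m| * (d - c)) by ring]
  linarith

lemma abs_geoczeY_sub_le (hab : a ≤ b) (hcd : c ≤ d)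
    (hfa : ContinuousOn (fun y => f (a, y)) (Icc c d))
    (hfb : ContinuousOn (fun y => f (b, y)) (Icc c d))
    (hf : ∀ x ∈ Icc a b, ∀ y ∈ Icc c d, HasDerivAt (fun t => f (t, y)) (p (x, y)) x)
    (hp : ∀ x ∈ Icc a b, ∀ y ∈ Icc c d, |p (x, y) - m| ≤ ε) :
    |geoczeY f a b c d - |m| * ((b - a) * (d - c))| ≤ ε * ((b - a) * (d - c)) := by
  -- `geoczeY f a b c d` is definitionally `geoczeX (f ∘ Prod.swap) c d a b`.
  have := abs_geoczeX_sub_le (f := f ∘ Prod.swap) (q := p ∘ Prod.swap) hcd hab hfa hfb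
    (fun y hy x hx => hf x hx y hy) (fun y hy x hx => hp x hx y hy)
  rwa [mul_comm (d - c)] at this

lemma abs_geoczeGamma_sub_le {mp mq : ℝ} (hab : a ≤ b) (hcd : c ≤ d)
    (hfx : ∀ x ∈ Icc a b, ∀ y ∈ Icc c d, HasDerivAt (fun t => f (t, y)) (p (x, y)) x)
    (hfy : ∀ x ∈ Icc a b, ∀ y ∈ Icc c d, HasDerivAt (fun t => f (x, t)) (q (x, y)) y)
    (hp : ∀ x ∈ Icc a b, ∀ y ∈ Icc c d, |p (x, y) - mp| ≤ ε)
    (hq : ∀ x ∈ Icc a b, ∀ y ∈ Icc c d, |q (x, y) - mq| ≤ ε) :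
    |geoczeGamma f a b c d - (b - a) * (d - c) * √(1 + mp ^ 2 + mq ^ 2)| ≤
      2 * ε * ((b - a) * (d - c)) := by
  have hX := abs_geoczeX_sub_le hab hcd
    (fun x hx => (hfx x hx c ⟨le_rfl, hcd⟩).continuousAt.continuousWithinAt)
    (fun x hx => (hfx x hx d ⟨hcd, le_rfl⟩).continuousAt.continuousWithinAt) hfy hq
  have hY := abs_geoczeY_sub_le hab hcd
    (fun y hy => (hfy a ⟨le_rfl, hab⟩ y hy).continuousAt.continuousWithinAt)
    (fun y hy => (hfy b ⟨hab, le_rfl⟩ y hy).continuousAt.continuousWithinAt) hfx hp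
  set V := (b - a) * (d - c)
  have hV : 0 ≤ V := mul_nonneg (sub_nonneg.2 hab) (sub_nonneg.2 hcd)
  have hVm : √((|mq| * V) ^ 2 + (|mp| * V) ^ 2 + V ^ 2) = V * √(1 + mp ^ 2 + mq ^ 2) := by
    rw [Real.sqrt_eq_iff_eq_sq (by positivity) (mul_nonneg hV (Real.sqrt_nonneg _))]
    simp only [mul_pow, sq_abs]
    rw [Real.sq_sqrt (by positivity)]
    ring
  rw [← hVm, geoczeGamma]
  refine (abs_sqrt_sq_add_sq_add_sub_le (sq_nonneg V) _ _ _ _).trans ?_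
  linarith

lemma abs_geoczeGamma_sub_setIntegral_le (hab : a ≤ b) (hcd : c ≤ d)
    (hpc : ContinuousOn p (Icc (a, c) (b, d))) (hqc : ContinuousOn q (Icc (a, c) (b, d)))
    (hdx : ∀ z ∈ Icc ((a, c) : ℝ × ℝ) (b, d), HasDerivAt (fun t => f (t, z.2)) (p z) z.1)
    (hdy : ∀ z ∈ Icc ((a, c) : ℝ × ℝ) (b, d), HasDerivAt (fun t => f (z.1, t)) (q z) z.2)
    (hp : ∀ z ∈ Icc ((a, c) : ℝ × ℝ) (b, d), |p z - p (a, c)| ≤ ε)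
    (hq : ∀ z ∈ Icc ((a, c) : ℝ × ℝ) (b, d), |q z - q (a, c)| ≤ ε) :
    |geoczeGamma f a b c d - ∫ z in Icc ((a, c) : ℝ × ℝ) (b, d), √(1 + p z ^ 2 + q z ^ 2)| ≤
      4 * ε * ((b - a) * (d - c)) := by
  have hmem : ∀ x ∈ Icc a b, ∀ y ∈ Icc c d, ((x, y) : ℝ × ℝ) ∈ Icc (a, c) (b, d) :=
    fun x hx y hy => ⟨⟨hx.1, hy.1⟩, hx.2, hy.2⟩
  have hΓ := abs_geoczeGamma_sub_le hab hcd (fun x hx y hy => hdx _ (hmem x hx y hy))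
    (fun x hx y hy => hdy _ (hmem x hx y hy)) (fun x hx y hy => hp _ (hmem x hx y hy))
    (fun x hx y hy => hq _ (hmem x hx y hy))
  have hg : ContinuousOn (fun z => √(1 + p z ^ 2 + q z ^ 2)) (Icc (a, c) (b, d)) :=
    ((continuousOn_const.add (hpc.pow 2)).add (hqc.pow 2)).sqrt
  have hI := abs_setIntegral_sub_le (μ := volume) (C := √(1 + p (a, c) ^ 2 + q (a, c) ^ 2))
    (δ := 2 * ε)
    isCompact_Icc.measure_lt_top (hg.integrableOn_compact isCompact_Icc) fun z hz => by
      rw [add_rotate (1 : ℝ), add_rotate (1 : ℝ)]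
      refine (abs_sqrt_sq_add_sq_add_sub_le zero_le_one _ _ _ _).trans ?_
      linarith [hp z hz, hq z hz]
  rw [volume_real_Icc_prod hab hcd] at hI
  rw [abs_le] at hΓ hI ⊢
  constructor <;> linarith

end Rectangle

lemma abs_sum_geoczeGamma_sub_integral_le {ι : Type*} [Fintype ι] {f p q : ℝ × ℝ → ℝ}
    {a b c d : ι → ℝ} {ε : ℝ}
    (hp : ContinuousOn p unitSquare) (hq : ContinuousOn q unitSquare)
    (hdx : ∀ z ∈ unitSquare, HasDerivAt (fun t => f (t, z.2)) (p z) z.1)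
    (hdy : ∀ z ∈ unitSquare, HasDerivAt (fun t => f (z.1, t)) (q z) z.2)
    (hab : ∀ i, a i ≤ b i) (hcd : ∀ i, c i ≤ d i)
    (hcover : ⋃ i, Icc ((a i, c i) : ℝ × ℝ) (b i, d i) = unitSquare)
    (hdisj : ∀ i j, i ≠ j →
      interior (Icc ((a i, c i) : ℝ × ℝ) (b i, d i)) ∩
        interior (Icc ((a j, c j) : ℝ × ℝ) (b j, d j)) = ∅)
    (hpε : ∀ i, ∀ z ∈ Icc ((a i, c i) : ℝ × ℝ) (b i, d i), |p z - p (a i, c i)| ≤ ε)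
    (hqε : ∀ i, ∀ z ∈ Icc ((a i, c i) : ℝ × ℝ) (b i, d i), |q z - q (a i, c i)| ≤ ε) :
    |∑ i, geoczeGamma f (a i) (b i) (c i) (d i) - ∫ z in unitSquare, √(1 + p z ^ 2 + q z ^ 2)| ≤
      4 * ε := by
  have hsub : ∀ i, Icc ((a i, c i) : ℝ × ℝ) (b i, d i) ⊆ unitSquare :=
    fun i => hcover ▸ subset_iUnion (fun i => Icc ((a i, c i) : ℝ × ℝ) (b i, d i)) i
  have harea : ∑ i, (b i - a i) * (d i - c i) = 1 := by
    have := sum_setIntegral_eq_of_iUnion_eq (μ := volume) (g := fun _ => (1 : ℝ))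
      (fun i => convex_Icc _ _) hcover hdisj (integrableOn_const isCompact_Icc.measure_lt_top.ne)
    simpa [volume_real_Icc_prod (hab _) (hcd _), unitSquare,
      volume_real_Icc_prod zero_le_one zero_le_one] using this
  have hg : IntegrableOn (fun z => √(1 + p z ^ 2 + q z ^ 2)) unitSquare :=
    ((continuousOn_const.add (hp.pow 2)).add (hq.pow 2)).sqrt.integrableOn_compact isCompact_Icc
  rw [← sum_setIntegral_eq_of_iUnion_eq (fun i => convex_Icc _ _) hcover hdisj hg,
    ← Finset.sum_sub_distrib]
  calc _ ≤ ∑ i, 4 * ε * ((b i - a i) * (d i - c i)) :=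
        (Finset.abs_sum_le_sum_abs _ _).trans (Finset.sum_le_sum fun i _ =>
          abs_geoczeGamma_sub_setIntegral_le (hab i) (hcd i) (hp.mono (hsub i))
            (hq.mono (hsub i)) (fun z hz => hdx z (hsub i hz)) (fun z hz => hdy z (hsub i hz))
            (hpε i) (hqε i))
    _ = 4 * ε := by rw [← Finset.mul_sum, harea, mul_one]

/-- If `f` has continuous partial derivatives `p = ∂f/∂x`, `q = ∂f/∂y` on `Q`, then the
Geöcze sums along any sequence of subdivisions of `Q` into nonoverlapping oriented
rectangles whose maximum diameter tends to zero converge to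
`∬_Q √(1 + p² + q²) dx dy`. -/
theorem geocze_sums_tendsto_integral (f p q : ℝ × ℝ → ℝ)
    (hp : ContinuousOn p unitSquare) (hq : ContinuousOn q unitSquare)
    (hdx : ∀ z ∈ unitSquare, HasDerivAt (fun t => f (t, z.2)) (p z) z.1)
    (hdy : ∀ z ∈ unitSquare, HasDerivAt (fun t => f (z.1, t)) (q z) z.2)
    (k : ℕ → ℕ) (a b c d : (n : ℕ) → Fin (k n) → ℝ)
    (hab : ∀ n i, a n i < b n i) (hcd : ∀ n i, c n i < d n i)
    (hcover : ∀ n, (⋃ i, Set.Icc ((a n i, c n i) : ℝ × ℝ) (b n i, d n i)) = unitSquare)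
    (hdisj : ∀ n, ∀ i j, i ≠ j →
      interior (Set.Icc ((a n i, c n i) : ℝ × ℝ) (b n i, d n i)) ∩
        interior (Set.Icc ((a n j, c n j) : ℝ × ℝ) (b n j, d n j)) = ∅)
    (hmesh : ∀ ε > 0, ∃ N, ∀ n ≥ N, ∀ i,
      Metric.diam (Set.Icc ((a n i, c n i) : ℝ × ℝ) (b n i, d n i)) < ε) :
    Tendsto (fun n => ∑ i, geoczeGamma f (a n i) (b n i) (c n i) (d n i)) atTop
      (𝓝 (∫ z in unitSquare, Real.sqrt (1 + (p z) ^ 2 + (q z) ^ 2))) := by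
  rw [Metric.tendsto_atTop]
  intro ε hε
  obtain ⟨δp, hδp, hpδ⟩ := Metric.uniformContinuousOn_iff.mp
    (isCompact_Icc.uniformContinuousOn_of_continuous hp) (ε / 8) (by positivity)
  obtain ⟨δq, hδq, hqδ⟩ := Metric.uniformContinuousOn_iff.mp
    (isCompact_Icc.uniformContinuousOn_of_continuous hq) (ε / 8) (by positivity)
  obtain ⟨N, hN⟩ := hmesh (min δp δq) (lt_min hδp hδq)
  refine ⟨N, fun n hn => ?_⟩
  have hsub : ∀ i, Icc ((a n i, c n i) : ℝ × ℝ) (b n i, d n i) ⊆ unitSquare :=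
    fun i => hcover n ▸ subset_iUnion (fun i => Icc ((a n i, c n i) : ℝ × ℝ) (b n i, d n i)) i
  have hcorner : ∀ i, ((a n i, c n i) : ℝ × ℝ) ∈ Icc (a n i, c n i) (b n i, d n i) :=
    fun i => left_mem_Icc.2 ⟨(hab n i).le, (hcd n i).le⟩
  have := abs_sum_geoczeGamma_sub_integral_le (f := f) hp hq hdx hdy (fun i => (hab n i).le)
    (fun i => (hcd n i).le) (hcover n) (hdisj n)
    (fun i z hz => abs_sub_le_of_diam_lt hpδ (hsub i) isCompact_Icc.isBounded
      ((hN n hn i).trans_le (min_le_left _ _)) hz (hcorner i))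
    (fun i z hz => abs_sub_le_of_diam_lt hqδ (hsub i) isCompact_Icc.isBounded
      ((hN n hn i).trans_le (min_le_right _ _)) hz (hcorner i))
  rw [Real.dist_eq]
  linarith
end
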